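/- Energy conservation for the discrete n-th gradient particle system, periodic case. Let n ≥ 1, A_0, …, A_n ∈ ℝ, R ∈ C¹(ℝ²), N ∈ ℕ, ε > 0, and let u_i : [0,T] → ℝ, i ∈ ℤ/N, be a C² solution of the Euler–Lagrange equations ü_i + Σ_{α=0}^n (−1)^α A_α (Δ_ε^α u)_i + ∂_{ξ₀}R(u_i, (D⁺_ε u)_i) − (D⁻_ε [∂_{ξ₁}R(u, D⁺_ε u)])_i = 0. Then the discrete energy E_ε(t) = Σ_{i ∈ ℤ/N} ε [ (1/2) u̇_i(t)² + (1/2) Σ_{α=0}^n A_α |(D_ε^α u(t))_i|² + R(u_i(t), (D⁺_ε u(t))_i) ] is constant in t. -/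

import Mathlib

open Finset Set

noncomputable section

/-- Discrete Laplacian on the periodic lattice `ℤ/N`:
`(Δ_ε u)_i = ε⁻² (u_{i+1} + u_{i-1} - 2 u_i)`. -/
def latLap (ε : ℝ) {N : ℕ} (v : ZMod N → ℝ) : ZMod N → ℝ :=
  fun i => (v (i + 1) + v (i - 1) - 2 * v i) / ε ^ 2

/-- Right discrete derivative on the periodic lattice: `(D⁺_ε u)_i = (u_{i+1} - u_i)/ε`. -/
def latDplus (ε : ℝ) {N : ℕ} (v : ZMod N → ℝ) : ZMod N → ℝ :=
  fun i => (v (i + 1) - v i) / ε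

/-- Left discrete derivative on the periodic lattice: `(D⁻_ε u)_i = (u_i - u_{i-1})/ε`. -/
def latDminus (ε : ℝ) {N : ℕ} (v : ZMod N → ℝ) : ZMod N → ℝ :=
  fun i => (v i - v (i - 1)) / ε

/-- The `α`-th discrete derivative on the lattice: `D_ε^α = Δ_ε^{α/2}` for `α` even
and `D_ε^α = D⁺_ε Δ_ε^{(α-1)/2}` for `α` odd. -/
def latD (ε : ℝ) {N : ℕ} (α : ℕ) (v : ZMod N → ℝ) : ZMod N → ℝ :=
  if α % 2 = 0 then (latLap ε)^[α / 2] v else latDplus ε ((latLap ε)^[α / 2] v)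

/-!
Along any trajectory the energy changes at the rate `ε Σ_i u̇_i (EL_i)`, where `EL_i` is the
left-hand side of the `i`-th Euler–Lagrange equation, so it is constant along solutions. The
rate identity rests on summation by parts on the periodic lattice, `Σ D⁺f · g = -Σ f · D⁻g`:
it moves `D⁺` off `u̇` in the `∂_{ξ₁}R` term, and since `Δ = D⁻D⁺` is then self-adjoint it gives
`Σ D^α f · D^α g = (-1)^α Σ Δ^α f · g`, which turns the derivative of the quadratic part into
the linear terms of the equation.
-/

theorem latLap_eq_latDminus_latDplus (ε : ℝ) {N : ℕ} (f : ZMod N → ℝ) :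
    latLap ε f = latDminus ε (latDplus ε f) := by
  ext i
  simp only [latLap, latDminus, latDplus, sub_add_cancel]
  ring

section SummationByParts

variable {N : ℕ} [NeZero N]

theorem sum_latDplus_mul (ε : ℝ) (f g : ZMod N → ℝ) :
    ∑ i, latDplus ε f i * g i = -∑ i, f i * latDminus ε g i := by
  have hshift : ∑ i, f (i + 1) * g i = ∑ i, f i * g (i - 1) := by
    simpa using Equiv.sum_comp (Equiv.addRight (1 : ZMod N)) fun i => f i * g (i - 1)
  simp only [latDplus, latDminus, div_mul_eq_mul_div, mul_div_assoc', ← Finset.sum_div,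
    ← neg_div, sub_mul, mul_sub, Finset.sum_sub_distrib, hshift]
  ring

theorem sum_latLap_mul (ε : ℝ) (f g : ZMod N → ℝ) :
    ∑ i, latLap ε f i * g i = ∑ i, f i * latLap ε g i := by
  have hf := sum_latDplus_mul ε g (latDplus ε f)
  have hg := sum_latDplus_mul ε f (latDplus ε g)
  simp only [← latLap_eq_latDminus_latDplus, mul_comm (latDplus ε g _)] at hf hg
  simp only [mul_comm (latLap ε f _)]
  linarith

theorem sum_latLap_iterate_mul (ε : ℝ) (k : ℕ) (f g : ZMod N → ℝ) :
    ∑ i, (latLap ε)^[k] f i * g i = ∑ i, f i * (latLap ε)^[k] g i := by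
  induction k generalizing g with
  | zero => rfl
  | succ k ih =>
    rw [Function.iterate_succ_apply', sum_latLap_mul, ih, Function.iterate_succ_apply]

theorem sum_latD_mul_latD (ε : ℝ) (α : ℕ) (f g : ZMod N → ℝ) :
    ∑ i, latD ε α f i * latD ε α g i = (-1) ^ α * ∑ i, (latLap ε)^[α] f i * g i := by
  rcases Nat.even_or_odd' α with ⟨k, rfl | rfl⟩
  · have hmod : 2 * k % 2 = 0 := by omega
    have hdiv : 2 * k / 2 = k := by omega
    simp only [latD, hmod, hdiv, ↓reduceIte]
    rw [pow_mul, neg_one_sq, one_pow, one_mul, two_mul, Function.iterate_add_apply,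
      sum_latLap_iterate_mul ε k ((latLap ε)^[k] f)]
  · have hmod : (2 * k + 1) % 2 ≠ 0 := by omega
    have hdiv : (2 * k + 1) / 2 = k := by omega
    simp only [latD, hmod, hdiv, ↓reduceIte]
    rw [sum_latDplus_mul, ← latLap_eq_latDminus_latDplus,
      ← Function.iterate_succ_apply' (latLap ε),
      ← sum_latLap_iterate_mul, ← Function.iterate_add_apply, pow_succ, pow_mul, neg_one_sq,
      one_pow, one_mul, neg_one_mul, two_mul, add_right_comm]

end SummationByParts

section Derivatives

variable {N : ℕ} {ε : ℝ} {v : ℝ → ZMod N → ℝ} {v' : ZMod N → ℝ} {t : ℝ}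

theorem hasDerivAt_latLap (h : HasDerivAt v v' t) :
    HasDerivAt (fun s => latLap ε (v s)) (latLap ε v') t := by
  rw [hasDerivAt_pi] at h ⊢
  intro i
  exact (((h (i + 1)).add (h (i - 1))).sub ((h i).const_mul 2)).div_const (ε ^ 2)

theorem hasDerivAt_latDplus (h : HasDerivAt v v' t) :
    HasDerivAt (fun s => latDplus ε (v s)) (latDplus ε v') t := by
  rw [hasDerivAt_pi] at h ⊢
  intro i
  exact ((h (i + 1)).sub (h i)).div_const ε

theorem hasDerivAt_latLap_iterate (k : ℕ) (h : HasDerivAt v v' t) :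
    HasDerivAt (fun s => (latLap ε)^[k] (v s)) ((latLap ε)^[k] v') t := by
  induction k with
  | zero => exact h
  | succ k ih => simpa only [Function.iterate_succ_apply'] using hasDerivAt_latLap ih

theorem hasDerivAt_latD (α : ℕ) (h : HasDerivAt v v' t) :
    HasDerivAt (fun s => latD ε α (v s)) (latD ε α v') t := by
  unfold latD
  split_ifs
  · exact hasDerivAt_latLap_iterate _ h
  · exact hasDerivAt_latDplus (hasDerivAt_latLap_iterate _ h)

end Derivatives

theorem fderiv_uncurry_apply {R : ℝ → ℝ → ℝ} {p : ℝ × ℝ}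
    (hR : DifferentiableAt ℝ (Function.uncurry R) p) (x y : ℝ) :
    fderiv ℝ (Function.uncurry R) p (x, y)
      = x * deriv (fun a => R a p.2) p.1 + y * deriv (fun b => R p.1 b) p.2 := by
  have h₀ : HasDerivAt (fun a => R a p.2) (fderiv ℝ (Function.uncurry R) p (1, 0)) p.1 :=
    hR.hasFDerivAt.comp_hasDerivAt_of_eq p.1
      ((hasDerivAt_id p.1).prodMk (hasDerivAt_const p.1 p.2)) rfl
  have h₁ : HasDerivAt (fun b => R p.1 b) (fderiv ℝ (Function.uncurry R) p (0, 1)) p.2 :=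
    hR.hasFDerivAt.comp_hasDerivAt_of_eq p.2
      ((hasDerivAt_const p.2 p.1).prodMk (hasDerivAt_id p.2)) rfl
  have hxy : ((x, y) : ℝ × ℝ) = x • (1, 0) + y • (0, 1) := by simp
  rw [h₀.deriv, h₁.deriv, hxy, map_add, map_smul, map_smul, smul_eq_mul, smul_eq_mul]

theorem hasDerivAt_uncurry_comp {R : ℝ → ℝ → ℝ} {x y : ℝ → ℝ} {x' y' t : ℝ}
    (hR : DifferentiableAt ℝ (Function.uncurry R) (x t, y t))
    (hx : HasDerivAt x x' t) (hy : HasDerivAt y y' t) :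
    HasDerivAt (fun s => R (x s) (y s))
      (x' * deriv (fun a => R a (y t)) (x t) + y' * deriv (fun b => R (x t) b) (y t)) t := by
  rw [← fderiv_uncurry_apply hR]
  exact hR.hasFDerivAt.comp_hasDerivAt t (hx.prodMk hy)

theorem ContDiff.hasDerivAt_deriv {f : ℝ → ℝ} (hf : ContDiff ℝ 2 f) (t : ℝ) :
    HasDerivAt (deriv f) (deriv (deriv f) t) t :=
  ((hf.deriv' (n := 1)).differentiable one_ne_zero t).hasDerivAt

section Energy

variable (n : ℕ) (A : ℕ → ℝ) (R : ℝ → ℝ → ℝ) (ε : ℝ) {N : ℕ} [NeZero N]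

def latticeEnergy (pos vel : ZMod N → ℝ) : ℝ :=
  ∑ i, ε * ((1 / 2) * vel i ^ 2
    + (1 / 2) * (∑ α ∈ Finset.range (n + 1), A α * latD ε α pos i ^ 2)
    + R (pos i) (latDplus ε pos i))

def latticeEulerLagrange (pos acc : ZMod N → ℝ) (i : ZMod N) : ℝ :=
  acc i + (∑ α ∈ Finset.range (n + 1), (-1 : ℝ) ^ α * A α * ((latLap ε)^[α] pos i))
    + deriv (fun a => R a (latDplus ε pos i)) (pos i)
    - latDminus ε (fun j => deriv (fun b => R (pos j) b) (latDplus ε pos j)) i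

theorem energy_rate_eq_sum_mul_latticeEulerLagrange (pos vel acc : ZMod N → ℝ) :
    ∑ i, ε * (vel i * acc i
      + ∑ α ∈ Finset.range (n + 1), A α * (latD ε α pos i * latD ε α vel i)
      + (vel i * deriv (fun a => R a (latDplus ε pos i)) (pos i)
        + latDplus ε vel i * deriv (fun b => R (pos i) b) (latDplus ε pos i)))
    = ε * ∑ i, vel i * latticeEulerLagrange n A R ε pos acc i := by
  have hquadratic : ∑ i, ∑ α ∈ Finset.range (n + 1), A α * (latD ε α pos i * latD ε α vel i)
      = ∑ i, vel i * ∑ α ∈ Finset.range (n + 1), (-1 : ℝ) ^ α * A α * (latLap ε)^[α] pos i := by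
    calc _ = ∑ α ∈ Finset.range (n + 1), A α * ∑ i, latD ε α pos i * latD ε α vel i := by
          rw [Finset.sum_comm]
          simp only [Finset.mul_sum]
      _ = ∑ α ∈ Finset.range (n + 1), ∑ i, vel i * ((-1) ^ α * A α * (latLap ε)^[α] pos i) := by
          refine Finset.sum_congr rfl fun α _ => ?_
          rw [sum_latD_mul_latD, Finset.mul_sum, Finset.mul_sum]
          exact Finset.sum_congr rfl fun i _ => by ring
      _ = _ := by
          rw [Finset.sum_comm]
          simp only [Finset.mul_sum]
  have hinteraction :=
    sum_latDplus_mul ε vel fun j => deriv (fun b => R (pos j) b) (latDplus ε pos j)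
  simp only [latticeEulerLagrange, mul_add, mul_sub, Finset.sum_add_distrib,
    Finset.sum_sub_distrib, ← Finset.mul_sum, hquadratic, hinteraction]
  ring

theorem hasDerivAt_latticeEnergy {pos vel : ℝ → ZMod N → ℝ} {acc : ZMod N → ℝ} {t : ℝ}
    (hpos : HasDerivAt pos (vel t) t) (hvel : HasDerivAt vel acc t)
    (hR : ∀ i, DifferentiableAt ℝ (Function.uncurry R) (pos t i, latDplus ε (pos t) i)) :
    HasDerivAt (fun s => latticeEnergy n A R ε (pos s) (vel s))
      (ε * ∑ i, vel t i * latticeEulerLagrange n A R ε (pos t) acc i) t := by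
  rw [← energy_rate_eq_sum_mul_latticeEulerLagrange]
  refine HasDerivAt.fun_sum fun i _ => HasDerivAt.const_mul ε ?_
  have hkinetic : HasDerivAt (fun s => 1 / 2 * vel s i ^ 2) (vel t i * acc i) t := by
    refine (((hasDerivAt_pi.mp hvel i).fun_pow 2).const_mul (1 / 2 : ℝ)).congr_deriv ?_
    ring
  have hquadratic : HasDerivAt
      (fun s => 1 / 2 * ∑ α ∈ Finset.range (n + 1), A α * latD ε α (pos s) i ^ 2)
      (∑ α ∈ Finset.range (n + 1), A α * (latD ε α (pos t) i * latD ε α (vel t) i)) t := by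
    refine ((HasDerivAt.fun_sum fun α (_ : α ∈ Finset.range (n + 1)) =>
      ((hasDerivAt_pi.mp (hasDerivAt_latD (ε := ε) α hpos) i).fun_pow 2).const_mul
        (A α)).const_mul (1 / 2 : ℝ)).congr_deriv ?_
    rw [Finset.mul_sum]
    exact Finset.sum_congr rfl fun α _ => by ring
  have hinteraction := hasDerivAt_uncurry_comp (hR i) (hasDerivAt_pi.mp hpos i)
    (hasDerivAt_pi.mp (hasDerivAt_latDplus hpos) i)
  exact (hkinetic.add hquadratic).add hinteraction

end Energy

theorem discrete_energy_conservation_general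
    (n : ℕ) (A : ℕ → ℝ)
    (R : ℝ → ℝ → ℝ) (hR : ContDiff ℝ 1 (Function.uncurry R))
    (N : ℕ) [NeZero N] (ε : ℝ) (T : ℝ)
    (u : ℝ → ZMod N → ℝ)
    (hu : ∀ i : ZMod N, ContDiff ℝ 2 (fun t => u t i))
    -- the Euler–Lagrange equations on `[0,T]`
    (hEL : ∀ t ∈ Icc (0 : ℝ) T, ∀ i : ZMod N,
       deriv (deriv (fun s => u s i)) t
         + (∑ α ∈ Finset.range (n + 1), (-1 : ℝ) ^ α * A α * ((latLap ε)^[α] (u t) i))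
         + deriv (fun a => R a (latDplus ε (u t) i)) (u t i)
         - latDminus ε (fun j => deriv (fun b => R (u t j) b) (latDplus ε (u t) j)) i
       = 0) :
    ∀ t ∈ Icc (0 : ℝ) T,
      (∑ i : ZMod N, ε * ((1 / 2) * (deriv (fun s => u s i) t) ^ 2
          + (1 / 2) * (∑ α ∈ Finset.range (n + 1), A α * (latD ε α (u t) i) ^ 2)
          + R (u t i) (latDplus ε (u t) i)))
      = ∑ i : ZMod N, ε * ((1 / 2) * (deriv (fun s => u s i) 0) ^ 2
          + (1 / 2) * (∑ α ∈ Finset.range (n + 1), A α * (latD ε α (u 0) i) ^ 2)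
          + R (u 0 i) (latDplus ε (u 0) i)) := by
  let vel : ℝ → ZMod N → ℝ := fun t i => deriv (fun s => u s i) t
  let acc : ℝ → ZMod N → ℝ := fun t i => deriv (deriv fun s => u s i) t
  have hE : ∀ t ∈ Icc (0 : ℝ) T,
      HasDerivAt (fun s => latticeEnergy n A R ε (u s) (vel s)) 0 t := by
    intro t ht
    have hpos : HasDerivAt u (vel t) t := hasDerivAt_pi.mpr fun i =>
      ((hu i).differentiable two_ne_zero t).hasDerivAt
    have hvel : HasDerivAt vel (acc t) t :=
      hasDerivAt_pi.mpr fun i => (hu i).hasDerivAt_deriv t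
    have hsolution : ∀ i, latticeEulerLagrange n A R ε (u t) (acc t) i = 0 := hEL t ht
    simpa only [hsolution, mul_zero, Finset.sum_const_zero] using
      hasDerivAt_latticeEnergy n A R ε hpos hvel fun i => hR.differentiable one_ne_zero _
  exact constant_of_has_deriv_right_zero
    (fun x hx => (hE x hx).continuousAt.continuousWithinAt)
    (fun x hx => (hE x (Ico_subset_Icc_self hx)).hasDerivWithinAt)

/-- **Energy conservation for the discrete `n`-th gradient particle system, periodic
case.**  If `u_i : [0,T] → ℝ`, `i ∈ ℤ/N`, is a `C²` solution of the Euler–Lagrange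
equations `ü_i + Σ_α (-1)^α A_α (Δ_ε^α u)_i + ∂_{ξ₀}R(u_i, (D⁺_ε u)_i)
- (D⁻_ε[∂_{ξ₁}R(u, D⁺_ε u)])_i = 0`, then the discrete energy
`E_ε(t) = Σ_i ε [ (1/2) u̇_i² + (1/2) Σ_α A_α |(D_ε^α u)_i|² + R(u_i, (D⁺_ε u)_i) ]`
is constant in `t`. -/
theorem discrete_energy_conservation
    (n : ℕ) (hn : 1 ≤ n) (A : ℕ → ℝ)
    (R : ℝ → ℝ → ℝ) (hR : ContDiff ℝ 1 (Function.uncurry R))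
    (N : ℕ) [NeZero N] (ε : ℝ) (hε : 0 < ε) (T : ℝ) (hT : 0 < T)
    (u : ℝ → ZMod N → ℝ)
    (hu : ∀ i : ZMod N, ContDiff ℝ 2 (fun t => u t i))
    -- the Euler–Lagrange equations on `[0,T]`
    (hEL : ∀ t ∈ Icc (0 : ℝ) T, ∀ i : ZMod N,
       deriv (deriv (fun s => u s i)) t
         + (∑ α ∈ Finset.range (n + 1), (-1 : ℝ) ^ α * A α * ((latLap ε)^[α] (u t) i))
         + deriv (fun a => R a (latDplus ε (u t) i)) (u t i)
         - latDminus ε (fun j => deriv (fun b => R (u t j) b) (latDplus ε (u t) j)) i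
       = 0) :
    ∀ t ∈ Icc (0 : ℝ) T,
      (∑ i : ZMod N, ε * ((1 / 2) * (deriv (fun s => u s i) t) ^ 2
          + (1 / 2) * (∑ α ∈ Finset.range (n + 1), A α * (latD ε α (u t) i) ^ 2)
          + R (u t i) (latDplus ε (u t) i)))
      = ∑ i : ZMod N, ε * ((1 / 2) * (deriv (fun s => u s i) 0) ^ 2
          + (1 / 2) * (∑ α ∈ Finset.range (n + 1), A α * (latD ε α (u 0) i) ^ 2)
          + R (u 0 i) (latDplus ε (u 0) i)) :=
  discrete_energy_conservation_general n A R hR N ε T u hu hEL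

end
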